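/- Let 0 < λ₁ ≤ λ₂. If t₁ is a minimizer of F_{λ₁} over (0,T] and t₂ is a minimizer of F_{λ₂} over (0,T], then t₂ ≤ t₁. In other words, the optimal transmission duration is a non-increasing function of the Lagrange multiplier λ (which justifies computing the multiplier by bisection search). -/

import Mathlib

/-!
Writing `F_λ(t) = E(t) + λ t` with `E(t) = a t (2^{L/(Bt)} - 1)`, the exchange inequality
`F_{λ₁}(t₁) + F_{λ₂}(t₂) ≤ F_{λ₁}(t₂) + F_{λ₂}(t₁)` reads `(λ₂ - λ₁)(t₂ - t₁) ≤ 0`, which settles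
the case `λ₁ < λ₂`. When `λ₁ = λ₂`, the minimizer is unique: `F_λ(t) = t φ(L/(Bt))` is the
perspective of the strictly convex function `φ(x) = a (2^x - 1) + λ`, hence strictly convex.
-/

open Set

theorem StrictConvexOn.const_mul {E : Type*} [AddCommMonoid E] [Module ℝ E] {s : Set E}
    {f : E → ℝ} (hf : StrictConvexOn ℝ s f) {c : ℝ} (hc : 0 < c) :
    StrictConvexOn ℝ s (fun x => c * f x) := by
  refine ⟨hf.1, fun x hx y hy hxy α β hα hβ hαβ => ?_⟩
  have := mul_lt_mul_of_pos_left (hf.2 hx hy hxy hα hβ hαβ) hc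
  simp only [smul_eq_mul] at this ⊢
  linarith

theorem strictConvexOn_rpow_left {b : ℝ} (hb : 1 < b) :
    StrictConvexOn ℝ univ (fun x : ℝ => b ^ x) := by
  refine ⟨convex_univ, fun x _ y _ hxy α β hα hβ hαβ => ?_⟩
  have hlog : 0 < Real.log b := Real.log_pos hb
  have hne : Real.log b * x ≠ Real.log b * y := by
    simpa [hlog.ne'] using hxy
  have := strictConvexOn_exp.2 (mem_univ _) (mem_univ _) hne hα hβ hαβ
  simp only [smul_eq_mul, Real.rpow_def_of_pos (zero_lt_one.trans hb)] at this ⊢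
  convert this using 2
  ring

theorem StrictConvexOn.perspective {φ : ℝ → ℝ} (hφ : StrictConvexOn ℝ univ φ) {c : ℝ}
    (hc : c ≠ 0) : StrictConvexOn ℝ (Ioi 0) (fun t => t * φ (c / t)) := by
  refine ⟨convex_Ioi 0, fun x (hx : 0 < x) y (hy : 0 < y) hxy α β hα hβ hαβ => ?_⟩
  set u := α * x + β * y
  have hu : 0 < u := by positivity
  have hweights : α * x / u + β * y / u = 1 := by rw [← add_div, div_self hu.ne']
  have hcomb : c / u = α * x / u * (c / x) + β * y / u * (c / y) := by
    field_simp
    exact hαβ.symm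
  have hne : c / x ≠ c / y := by
    simpa [div_eq_mul_inv, hc] using hxy
  have hlt := hφ.2 (mem_univ _) (mem_univ _) hne (by positivity) (by positivity) hweights
  simp only [smul_eq_mul, ← hcomb] at hlt ⊢
  calc u * φ (c / u)
      < u * (α * x / u * φ (c / x) + β * y / u * φ (c / y)) := mul_lt_mul_of_pos_left hlt hu
    _ = α * (x * φ (c / x)) + β * (y * φ (c / y)) := by field_simp

theorem le_of_isMinOn_add_mul_of_lt {f : ℝ → ℝ} {s : Set ℝ} {lam₁ lam₂ t₁ t₂ : ℝ}
    (hlam : lam₁ < lam₂) (h₁ : IsMinOn (fun t => f t + lam₁ * t) s t₁)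
    (h₂ : IsMinOn (fun t => f t + lam₂ * t) s t₂) (ht₁ : t₁ ∈ s) (ht₂ : t₂ ∈ s) : t₂ ≤ t₁ := by
  have hex₁ : f t₁ + lam₁ * t₁ ≤ f t₂ + lam₁ * t₂ := h₁ ht₂
  have hex₂ : f t₂ + lam₂ * t₂ ≤ f t₁ + lam₂ * t₁ := h₂ ht₁
  have : (lam₂ - lam₁) * (t₂ - t₁) ≤ 0 := by linarith
  exact sub_nonpos.1 (nonpos_of_mul_nonpos_right this (sub_pos.2 hlam))

theorem strictConvexOn_lagrangianCost {a B L : ℝ} (ha : 0 < a) (hB : B ≠ 0) (hL : L ≠ 0)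
    (lam : ℝ) :
    StrictConvexOn ℝ (Ioi 0) (fun t => a * t * ((2 : ℝ) ^ (L / (B * t)) - 1) + lam * t) := by
  have hφ : StrictConvexOn ℝ univ (fun x : ℝ => a * (2 : ℝ) ^ x + (lam - a)) :=
    ((strictConvexOn_rpow_left one_lt_two).const_mul ha).add_const (lam - a)
  refine (hφ.perspective (div_ne_zero hL hB)).congr fun t _ => ?_
  simp only [div_div]
  ring

theorem optimal_duration_antitone_in_multiplier_general
    (B T a L lam1 lam2 t1 t2 : ℝ)
    (hB : 0 < B) (ha : 0 < a) (hL : 0 < L)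
    (hlam12 : lam1 ≤ lam2)
    (ht1 : t1 ∈ Set.Ioc (0 : ℝ) T) (ht2 : t2 ∈ Set.Ioc (0 : ℝ) T)
    (hmin1 : ∀ t ∈ Set.Ioc (0 : ℝ) T,
        a * t1 * ((2 : ℝ) ^ (L / (B * t1)) - 1) + lam1 * t1 ≤
          a * t * ((2 : ℝ) ^ (L / (B * t)) - 1) + lam1 * t)
    (hmin2 : ∀ t ∈ Set.Ioc (0 : ℝ) T,
        a * t2 * ((2 : ℝ) ^ (L / (B * t2)) - 1) + lam2 * t2 ≤
          a * t * ((2 : ℝ) ^ (L / (B * t)) - 1) + lam2 * t) :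
    t2 ≤ t1 := by
  rcases hlam12.lt_or_eq with hlt | rfl
  · exact le_of_isMinOn_add_mul_of_lt (f := fun t => a * t * ((2 : ℝ) ^ (L / (B * t)) - 1))
      hlt hmin1 hmin2 ht1 ht2
  · have hconvex := (strictConvexOn_lagrangianCost ha hB.ne' hL.ne' lam1).subset
      Ioc_subset_Ioi_self (convex_Ioc 0 T)
    exact (hconvex.eq_of_isMinOn hmin2 hmin1 ht2 ht1).le

/-- The optimal transmission duration is non-increasing in the Lagrange multiplier:
if `0 < λ₁ ≤ λ₂`, `t₁` minimizes `F_{λ₁}(t) = a*t*(2^(L/(B*t)) - 1) + λ₁*t` over `(0,T]`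
and `t₂` minimizes `F_{λ₂}` over `(0,T]`, then `t₂ ≤ t₁`. -/
theorem optimal_duration_antitone_in_multiplier
    (B T a L lam1 lam2 t1 t2 : ℝ)
    (hB : 0 < B) (hT : 0 < T) (ha : 0 < a) (hL : 0 < L)
    (hlam1 : 0 < lam1) (hlam12 : lam1 ≤ lam2)
    (ht1 : t1 ∈ Set.Ioc (0 : ℝ) T) (ht2 : t2 ∈ Set.Ioc (0 : ℝ) T)
    (hmin1 : ∀ t ∈ Set.Ioc (0 : ℝ) T,
        a * t1 * ((2 : ℝ) ^ (L / (B * t1)) - 1) + lam1 * t1 ≤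
          a * t * ((2 : ℝ) ^ (L / (B * t)) - 1) + lam1 * t)
    (hmin2 : ∀ t ∈ Set.Ioc (0 : ℝ) T,
        a * t2 * ((2 : ℝ) ^ (L / (B * t2)) - 1) + lam2 * t2 ≤
          a * t * ((2 : ℝ) ^ (L / (B * t)) - 1) + lam2 * t) :
    t2 ≤ t1 :=
  optimal_duration_antitone_in_multiplier_general B T a L lam1 lam2 t1 t2 hB ha hL hlam12 ht1 ht2
    hmin1 hmin2
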